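/- arXiv:2412.11571 — 2 statements merged into one kernel-verified Lean document; each statement's English description precedes it below -/
import Mathlib

section
/- (First Fundamental Theorem of Moser–Tardos theory.) Let Π = (V, Λ, C, dom, Bad) be a CSP whose dependency graph D_Π is locally finite, and let P be a probability measure on Λ making (Λ, P) a standard probability space with each Bad(c) measurable. Sample a random table t : V → Λ^ℕ from the product space (Λ^{V×ℕ}, P^{V×ℕ}). Then, for every witness digraph Γ with decoration δ, the probability that Γ is compatible with (Π, t) equals ∏_{x ∈ V(Γ)} P[Bad(δ(x))]. -/
open MeasureTheory Set
open scoped ENNReal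

/-- A constraint satisfaction problem (CSP): variables `V`, labels `Λ`, constraints `C`.
`dom c` is the finite set of variables of the constraint `c`, and `Bad c` is the set of
bad labelings `φ : dom c → Λ`. -/
structure CSP (V : Type*) (Λ : Type*) (C : Type*) where
  dom : C → Set V
  dom_finite : ∀ c, (dom c).Finite
  Bad : (c : C) → Set (↥(dom c) → Λ)

namespace CSP

variable {V Λ C : Type*}

/-- A labeling `f : V → Λ` violates the constraint `c` if its restriction to `dom c`
is a bad labeling. -/
def violates (Φ : CSP V Λ C) (f : V → Λ) (c : C) : Prop :=
  (fun v : ↥(Φ.dom c) => f v) ∈ Φ.Bad c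

/-- A solution of a CSP: a labeling satisfying every constraint. -/
def IsSolution (Φ : CSP V Λ C) (f : V → Λ) : Prop := ∀ c, ¬ Φ.violates f c

/-- The dependency graph of a CSP: distinct constraints are adjacent iff their domains meet. -/
def depGraph (Φ : CSP V Λ C) : SimpleGraph C where
  Adj c c' := c ≠ c' ∧ (Φ.dom c ∩ Φ.dom c').Nonempty
  symm := ⟨by
    intro c c' h
    exact ⟨h.1.symm, by rw [Set.inter_comm]; exact h.2⟩⟩
  loopless := ⟨fun c h => h.1 rfl⟩

/-- `P[Bad(c)]`: the probability of the set of bad labelings of `c` with respect to the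
product measure `P^{dom c}`. -/
noncomputable def badProb [MeasurableSpace Λ] (Φ : CSP V Λ C) (P : Measure Λ) (c : C) : ℝ≥0∞ :=
  haveI := (Φ.dom_finite c).fintype
  Measure.pi (fun _ : ↥(Φ.dom c) => P) (Φ.Bad c)

end CSP

/-- The ball of radius `R` around `c`: vertices joined to `c` by a path of at most `R` edges. -/
def gball {C : Type*} (G : SimpleGraph C) (c : C) : ℕ → Set C
  | 0 => {c}
  | R + 1 => gball G c R ∪ ⋃ x ∈ gball G c R, G.neighborSet x

lemma gball_finite {C : Type*} (G : SimpleGraph C)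
    (hlf : ∀ v, (G.neighborSet v).Finite) (c : C) : ∀ R, (gball G c R).Finite
  | 0 => Set.finite_singleton c
  | (R + 1) => ((gball_finite G hlf c R).union
      ((gball_finite G hlf c R).biUnion (fun x _ => hlf x)))

/-- The growth function `γ_G(R) = sup_v |B_G(v,R)|`, valued in `ℕ∞`. -/
noncomputable def growth {C : Type*} (G : SimpleGraph C) (R : ℕ) : ℕ∞ :=
  ⨆ v, (gball G v R).encard

/-- The exponential growth rate `egr(G) = inf_{R ≥ 1} γ_G(R)^{1/R}`, valued in `ℝ≥0∞`. -/
noncomputable def egr {C : Type*} (G : SimpleGraph C) : ℝ≥0∞ :=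
  ⨅ R : {n : ℕ // 1 ≤ n}, ((growth G R.1 : ℝ≥0∞) ^ ((R.1 : ℝ)⁻¹))

/-- The closed neighborhood `N[c]` of a vertex in a graph. -/
def closedNbhd {C : Type*} (G : SimpleGraph C) (c : C) : Set C :=
  insert c (G.neighborSet c)

/-- A set of vertices is independent if no two of its members are adjacent. -/
def IsIndep {C : Type*} (G : SimpleGraph C) (s : Set C) : Prop :=
  ∀ c ∈ s, ∀ c' ∈ s, ¬ G.Adj c c'

section BorelCSP

variable {V Λ C : Type*}

/-- The finite set obtained as the image of a tuple. -/
noncomputable def finsetOfTuple {X : Type*} (n : ℕ) (t : Fin n → X) : Finset X :=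
  haveI := Classical.decEq X
  Finset.image t Finset.univ

/-- The standard Borel structure on the space of finite subsets of `X`: a set of finite sets is
measurable iff for each `n` its preimage under the map `(x_1, …, x_n) ↦ {x_1, …, x_n}` is
measurable. -/
noncomputable def finsetMS (X : Type*) [MeasurableSpace X] : MeasurableSpace (Finset X) :=
  ⨅ n : ℕ, MeasurableSpace.map (finsetOfTuple (X := X) n) MeasurableSpace.pi

/-- The graph of a labeling `φ : dom c → Λ`, as a finite subset of `V × Λ`; this encodes a finite
partial function `V ⇀ Λ`. -/
noncomputable def CSP.graphOf (Φ : CSP V Λ C) (c : C) (φ : ↥(Φ.dom c) → Λ) :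
    Finset (V × Λ) :=
  haveI := Classical.decEq (V × Λ)
  (Φ.dom_finite c).toFinset.attach.image
    (fun v => (v.1, φ ⟨v.1, (Φ.dom_finite c).mem_toFinset.mp v.2⟩))

/-- A CSP on standard Borel spaces is Borel if `dom` is a Borel map into the space of finite
subsets of `V` and `{(c, φ) : φ ∈ Bad c}` is Borel in `C × (finite partial functions V ⇀ Λ)`,
finite partial functions being encoded by their graphs. -/
structure IsBorelCSP [MeasurableSpace V] [MeasurableSpace Λ] [MeasurableSpace C]
    (Φ : CSP V Λ C) : Prop where
  dom_meas : Measurable[_, finsetMS V] (fun c => (Φ.dom_finite c).toFinset)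
  bad_meas : MeasurableSet[(inferInstance : MeasurableSpace C).prod (finsetMS (V × Λ))]
    {p : C × Finset (V × Λ) | ∃ φ ∈ Φ.Bad p.1, p.2 = Φ.graphOf p.1 φ}

end BorelCSP

section MT

variable {V Λ C : Type*}

open scoped Classical

/-- The level function of the Moser–Tardos algorithm run with the sequence `I` of chosen
independent sets: `lev_0(v) = 0` and `lev_{n+1}(v) = lev_n(v) + 1` exactly when `v` belongs to the
domain of some constraint in `I n`. -/
noncomputable def MTlev (Φ : CSP V Λ C) (I : ℕ → Set C) : ℕ → V → ℕ
  | 0, _ => 0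
  | n + 1, v => MTlev Φ I n v + (if ∃ c ∈ I n, v ∈ Φ.dom c then 1 else 0)

/-- The labeling used at step `n` of the Moser–Tardos algorithm with table `t`. -/
noncomputable def CSP.MTstep (Φ : CSP V Λ C) (t : V → ℕ → Λ) (I : ℕ → Set C)
    (n : ℕ) : V → Λ :=
  fun v => t v (MTlev Φ I n v)

/-- An MT-sequence `I` is consistent with `(Φ, t)` if it can be produced by the Moser–Tardos
algorithm on input `(Φ, t)`: each `I n` is an independent set of constraints violated by the
current labeling. -/
noncomputable def CSP.Consistent (Φ : CSP V Λ C) (t : V → ℕ → Λ) (I : ℕ → Set C) : Prop :=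
  (∀ n, IsIndep Φ.depGraph (I n)) ∧ ∀ n, ∀ c ∈ I n, Φ.violates (Φ.MTstep t I n) c

/-- An MT-sequence consistent with `(Φ, t)` that can be produced by the *maximal* Moser–Tardos
algorithm: each `I n` is a maximal independent subset of the set of violated constraints. -/
noncomputable def CSP.MaximalCons (Φ : CSP V Λ C) (t : V → ℕ → Λ) (I : ℕ → Set C) : Prop :=
  Φ.Consistent t I ∧
    ∀ n, ∀ c, Φ.violates (Φ.MTstep t I n) c → c ∉ I n → ∃ c' ∈ I n, Φ.depGraph.Adj c c'

/-- The levels at `v` stabilize, i.e. `lev(v) = lim_n lev_n(v) < ∞`: the output labeling of the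
run of the Moser–Tardos algorithm is defined at `v`. -/
def StabilizesAt (Φ : CSP V Λ C) (I : ℕ → Set C) (v : V) : Prop :=
  ∃ N, ∀ n, N ≤ n → MTlev Φ I n v = MTlev Φ I N v

/-- A table is good if every run of the Moser–Tardos algorithm on `(Φ, t)` produces a labeling
defined on all of `V`. -/
def CSP.GoodTable (Φ : CSP V Λ C) (t : V → ℕ → Λ) : Prop :=
  ∀ I : ℕ → Set C, Φ.Consistent t I → ∀ v, StabilizesAt Φ I v

/-- The `(c, r)`-local CSP `Π_{c,r}`: constraints at distance more than `r` from `c` in the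
dependency graph are always violated. -/
noncomputable def CSP.localCSP (Φ : CSP V Λ C) (c : C) (r : ℕ) : CSP V Λ C where
  dom := Φ.dom
  dom_finite := Φ.dom_finite
  Bad a := if a ∈ gball Φ.depGraph c r then Φ.Bad a else Set.univ

/-- A finite MT-sequence: `Σ_n |I_n| < ∞`. -/
def FiniteMTSeq {C : Type*} (I : ℕ → Set C) : Prop :=
  {q : C × ℕ | q.1 ∈ I q.2}.Finite

/-- A finite MT-sequence is `(c, r, N, ε)`-Følner if `Σ_n |I_n ∩ B_D(c,r)| ≥ N` and
`Σ_n |I_n \ B_D(c,r)| < ε · Σ_n |I_n|`. -/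
def CSP.Folner (Φ : CSP V Λ C) (I : ℕ → Set C) (c : C) (r N : ℕ) (ε : ℝ) : Prop :=
  FiniteMTSeq I ∧
    N ≤ {q : C × ℕ | q.1 ∈ I q.2 ∧ q.1 ∈ gball Φ.depGraph c r}.ncard ∧
    ({q : C × ℕ | q.1 ∈ I q.2 ∧ q.1 ∉ gball Φ.depGraph c r}.ncard : ℝ) <
      ε * ({q : C × ℕ | q.1 ∈ I q.2}.ncard : ℝ)

/-- A table is `(c, R, N, ε)`-locally good if for all `r < R` there is no `(c, r, N, ε)`-Følner
MT-sequence consistent with `(Φ_{c,r}, t)`. -/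
noncomputable def CSP.LocallyGoodAt (Φ : CSP V Λ C) (t : V → ℕ → Λ) (c : C) (R N : ℕ)
    (ε : ℝ) : Prop :=
  ∀ r < R, ¬ ∃ I : ℕ → Set C, (Φ.localCSP c r).Consistent t I ∧ Φ.Folner I c r N ε

/-- A table is `(R, N, ε)`-locally good if it is `(c, R, N, ε)`-locally good for every `c`. -/
noncomputable def CSP.LocallyGood (Φ : CSP V Λ C) (t : V → ℕ → Λ) (R N : ℕ) (ε : ℝ) : Prop :=
  ∀ c, Φ.LocallyGoodAt t c R N ε

/-- `dom_R(c) = ⋃_{a ∈ B_D(c,R)} dom(a)`. -/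
def CSP.domR (Φ : CSP V Λ C) (c : C) (R : ℕ) : Set V :=
  ⋃ a ∈ gball Φ.depGraph c R, Φ.dom a

lemma CSP.domR_finite (Φ : CSP V Λ C) (hlf : ∀ c, (Φ.depGraph.neighborSet c).Finite)
    (c : C) (R : ℕ) : (Φ.domR c R).Finite :=
  (gball_finite _ hlf c R).biUnion (fun a _ => Φ.dom_finite a)

/-- The set `LBad_{R,N,ε}(c)` of partial tables `φ : dom_R(c) → Λ^ℕ` such that some
(equivalently, every) table extending `φ` is not `(c, R, N, ε)`-locally good. -/
noncomputable def CSP.LBad (Φ : CSP V Λ C) (c : C) (R N : ℕ) (ε : ℝ) :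
    Set (↥(Φ.domR c R) → ℕ → Λ) :=
  {φ | ∃ t : V → ℕ → Λ, (∀ v : ↥(Φ.domR c R), t v = φ v) ∧
    ¬ Φ.LocallyGoodAt t c R N ε}

/-- The CSP `LG(R, N, ε)` whose solutions are exactly the `(R, N, ε)`-locally good tables. -/
noncomputable def CSP.LG (Φ : CSP V Λ C) (R N : ℕ) (ε : ℝ)
    (h : ∀ c, (Φ.domR c R).Finite) : CSP V (ℕ → Λ) C where
  dom c := Φ.domR c R
  dom_finite := h
  Bad c := Φ.LBad c R N ε

end MT

/-- `Q` is the product of copies of `P` over the index set `ι`: the measure of every measurable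
cylinder is the corresponding finite product. -/
def IsProductOf {ι Λ : Type*} [MeasurableSpace Λ] (Q : Measure (ι → Λ)) (P : Measure Λ) : Prop :=
  ∀ (s : Finset ι) (A : ι → Set Λ), (∀ i ∈ s, MeasurableSet (A i)) →
    Q {g | ∀ i ∈ s, g i ∈ A i} = ∏ i ∈ s, P (A i)

/-- A finite decorated digraph: a simple digraph on a finite vertex type `X` together with a
decoration `δ : X → C`. -/
structure DecoratedDigraph (C : Type*) where
  X : Type
  fin : Fintype X
  E : X → X → Prop
  dec : X → C

attribute [instance] DecoratedDigraph.fin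

namespace DecoratedDigraph

/-- A digraph is acyclic if it has no directed cycles. -/
def Acyclic {C : Type*} (Γ : DecoratedDigraph C) : Prop :=
  ∀ (k : ℕ) (f : ℕ → Γ.X), 0 < k → (∀ i < k, Γ.E (f i) (f (i + 1))) → f 0 ≠ f k

/-- Isomorphism of decorated digraphs (preserving the decoration). -/
def Iso {C : Type*} (Γ Γ' : DecoratedDigraph C) : Prop :=
  ∃ e : Γ.X ≃ Γ'.X, (∀ x y, Γ.E x y ↔ Γ'.E (e x) (e y)) ∧ ∀ x, Γ'.dec (e x) = Γ.dec x

end DecoratedDigraph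

/-- A witness digraph: a finite decorated digraph with no directed cycles such that
`E x y ∨ E y x` holds iff `x ≠ y` and `δ(x) ∈ N[δ(y)]`. -/
def IsWitnessDigraph {V Λ C : Type*} (Φ : CSP V Λ C) (Γ : DecoratedDigraph C) : Prop :=
  Γ.Acyclic ∧
    ∀ x y : Γ.X, (Γ.E x y ∨ Γ.E y x) ↔ x ≠ y ∧ Γ.dec x ∈ closedNbhd Φ.depGraph (Γ.dec y)

/-- The full witness digraph `Γ(I)` of a finite MT-sequence `I`: vertices are pairs `(c, n)` with
`c ∈ I n`, with an edge from `(c, n)` to `(c', n')` iff `n < n'` and `c ∈ N[c']`, decorated by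
`δ(c, n) = c`. -/
noncomputable def fullWitness {V Λ : Type*} {C : Type} (Φ : CSP V Λ C) (I : ℕ → Set C)
    (hfin : {q : C × ℕ | q.1 ∈ I q.2}.Finite) : DecoratedDigraph C where
  X := {q : C × ℕ | q.1 ∈ I q.2}
  fin := hfin.fintype
  E x y := (x : C × ℕ).2 < (y : C × ℕ).2 ∧ (x : C × ℕ).1 ∈ closedNbhd Φ.depGraph (y : C × ℕ).1
  dec x := (x : C × ℕ).1

/-- A witness digraph is compatible with `(Φ, t)` if it is isomorphic to the full witness digraph
of some (finite) MT-sequence consistent with `(Φ, t)`. -/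
def CompatibleWith {V Λ : Type*} {C : Type} (Φ : CSP V Λ C) (t : V → ℕ → Λ)
    (Γ : DecoratedDigraph C) : Prop :=
  ∃ (I : ℕ → Set C) (hfin : {q : C × ℕ | q.1 ∈ I q.2}.Finite),
    Φ.Consistent t I ∧ Γ.Iso (fullWitness Φ I hfin)

/-- `Γ` has a unique sink, whose decoration is `c`. -/
def HasUniqueSinkAt {C : Type*} (Γ : DecoratedDigraph C) (c : C) : Prop :=
  ∃ σ : Γ.X, (∀ y, ¬ Γ.E σ y) ∧ Γ.dec σ = c ∧ ∀ y : Γ.X, (∀ z, ¬ Γ.E y z) → y = σ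

/-!
In the Moser–Tardos run described by a witness digraph `Γ`, the level of a variable `v` at the
moment the constraint at `x` is resampled is forced: it is the number `witnessLevel Φ Γ x v` of
predecessors of `x` whose constraint involves `v`. So `Γ` is compatible with `t` iff for every
vertex `x` the labeling `v ↦ t (v, witnessLevel Φ Γ x v)` is bad for `δ x`. Indeed, a realising
MT-sequence is the sequence of layers of a rank function increasing along the edges, and
conversely the layers of such a rank function (one exists as `Γ` is acyclic) form a consistent
MT-sequence. The witness property makes `(x, v) ↦ (v, witnessLevel Φ Γ x v)` injective, so these
events read pairwise disjoint entries of the table; they are therefore independent, with the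
probabilities `P[Bad (δ x)]`.
-/

theorem MeasureTheory.Measure.infinitePi_map_comp_of_injective {ι κ Λ : Type*}
    [MeasurableSpace Λ] (P : Measure Λ) [IsProbabilityMeasure P] {g : κ → ι}
    (hg : g.Injective) :
    (Measure.infinitePi fun _ : ι => P).map (fun t => t ∘ g) =
      Measure.infinitePi fun _ : κ => P := by
  classical
  refine Measure.eq_infinitePi _ fun s A hA => ?_
  have hpre : (fun t : ι → Λ => t ∘ g) ⁻¹' Set.pi s A =
      Set.pi (s.image g) (Function.extend g A fun _ => Set.univ) := by
    ext t
    simp [hg.extend_apply]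
  rw [Measure.map_apply (by fun_prop) (.pi (Set.to_countable _) fun i _ => hA i), hpre,
    Measure.infinitePi_pi, Finset.prod_image hg.injOn]
  · simp [hg.extend_apply]
  · simp only [Finset.mem_image]
    rintro _ ⟨k, -, rfl⟩
    simpa [hg.extend_apply] using hA k

namespace IsProductOf

variable {ι Λ : Type*} [MeasurableSpace Λ] {Q : Measure (ι → Λ)} {P : Measure Λ}
  [IsProbabilityMeasure P]

theorem eq_infinitePi (hQ : IsProductOf Q P) : Q = Measure.infinitePi fun _ => P :=
  Measure.eq_infinitePi _ fun s A hA => hQ s A fun i _ => hA i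

theorem measure_forall_mem_eq_prod (hQ : IsProductOf Q P) {X : Type*} [Fintype X]
    {D : X → Type*} [∀ x, Fintype (D x)] {g : (Σ x, D x) → ι} (hg : g.Injective)
    {B : ∀ x, Set (D x → Λ)} (hB : ∀ x, MeasurableSet (B x)) :
    Q {t | ∀ x, (fun d => t (g ⟨x, d⟩)) ∈ B x} = ∏ x, Measure.pi (fun _ : D x => P) (B x) := by
  have hpre : {t : ι → Λ | ∀ x, (fun d => t (g ⟨x, d⟩)) ∈ B x} =
      (MeasurableEquiv.piCurry (fun _ _ => Λ) ∘ fun t => t ∘ g) ⁻¹' Set.univ.pi B := by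
    ext t
    simp only [Set.mem_preimage, Set.mem_univ_pi]
    rfl
  rw [hpre, ← Measure.map_apply (by fun_prop) (.univ_pi hB), ← Measure.map_map (by fun_prop)
    (by fun_prop), hQ.eq_infinitePi, Measure.infinitePi_map_comp_of_injective P hg,
    Measure.infinitePi_map_piCurry (fun _ _ => P)]
  simp_rw [Measure.infinitePi_eq_pi, Measure.pi_pi]

end IsProductOf

namespace DecoratedDigraph

variable {C : Type*} {Γ : DecoratedDigraph C}

theorem exists_path_of_transGen {x y : Γ.X} (h : Relation.TransGen Γ.E x y) :
    ∃ (k : ℕ) (f : ℕ → Γ.X), 0 < k ∧ f 0 = x ∧ f k = y ∧ ∀ i < k, Γ.E (f i) (f (i + 1)) := by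
  induction h with
  | @single y hxy =>
    refine ⟨1, fun i => if i = 0 then x else y, one_pos, rfl, rfl, fun i hi => ?_⟩
    obtain rfl : i = 0 := by omega
    exact hxy
  | @tail y z _ hyz ih =>
    obtain ⟨k, f, hk, hf0, hfk, hf⟩ := ih
    refine ⟨k + 1, fun i => if i ≤ k then f i else z, k.succ_pos, by simp [hf0], by simp,
      fun i hi => ?_⟩
    rcases Nat.lt_or_eq_of_le (Nat.lt_succ_iff.mp hi) with hik | rfl
    · simpa [hik.le, Nat.succ_le_of_lt hik] using hf i hik
    · simpa [hfk] using hyz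

theorem Acyclic.not_transGen_self (hΓ : Γ.Acyclic) (x : Γ.X) : ¬ Relation.TransGen Γ.E x x := by
  intro hx
  obtain ⟨k, f, hk, hf0, hfk, hf⟩ := exists_path_of_transGen hx
  exact hΓ k f hk hf (hf0.trans hfk.symm)

theorem Acyclic.exists_rank (hΓ : Γ.Acyclic) : ∃ ρ : Γ.X → ℕ, ∀ x y, Γ.E x y → ρ x < ρ y := by
  refine ⟨fun x => {z | Relation.TransGen Γ.E z x}.ncard, fun x y hxy => ?_⟩
  refine Set.ncard_lt_ncard ⟨fun z hz => hz.tail hxy, fun hsub => ?_⟩ (Set.toFinite _)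
  exact hΓ.not_transGen_self x (hsub (Relation.TransGen.single hxy))

end DecoratedDigraph

theorem CSP.mem_closedNbhd_of_mem_dom {V Λ C : Type*} {Φ : CSP V Λ C} {c c' : C} {v : V}
    (hc : v ∈ Φ.dom c) (hc' : v ∈ Φ.dom c') : c ∈ closedNbhd Φ.depGraph c' := by
  by_cases h : c = c'
  · exact h ▸ Set.mem_insert c _
  · exact Set.mem_insert_of_mem _ ⟨Ne.symm h, v, hc', hc⟩

/-- The level `v` has reached when the constraint at `x` is resampled. -/
noncomputable def witnessLevel {V Λ C : Type*} (Φ : CSP V Λ C) (Γ : DecoratedDigraph C)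
    (x : Γ.X) (v : V) : ℕ :=
  {y : Γ.X | Γ.E y x ∧ v ∈ Φ.dom (Γ.dec y)}.ncard

namespace IsWitnessDigraph

variable {V Λ C : Type*} {Φ : CSP V Λ C} {Γ : DecoratedDigraph C}

theorem edge_or_edge_of_mem_dom (hΓ : IsWitnessDigraph Φ Γ) {x y : Γ.X} (hxy : x ≠ y) {v : V}
    (hx : v ∈ Φ.dom (Γ.dec x)) (hy : v ∈ Φ.dom (Γ.dec y)) : Γ.E x y ∨ Γ.E y x :=
  (hΓ.2 x y).mpr ⟨hxy, CSP.mem_closedNbhd_of_mem_dom hx hy⟩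

theorem witnessLevel_lt (hΓ : IsWitnessDigraph Φ Γ) {x y : Γ.X} (hyx : Γ.E y x) {v : V}
    (hy : v ∈ Φ.dom (Γ.dec y)) (hx : v ∈ Φ.dom (Γ.dec x)) :
    witnessLevel Φ Γ y v < witnessLevel Φ Γ x v := by
  have hcyc := hΓ.1.not_transGen_self
  refine Set.ncard_lt_ncard ⟨fun z ⟨hzy, hz⟩ => ⟨?_, hz⟩, fun hsub => ?_⟩ (Set.toFinite _)
  · have hzx : z ≠ x := by
      rintro rfl
      exact hcyc z ((Relation.TransGen.single hzy).tail hyx)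
    refine (hΓ.edge_or_edge_of_mem_dom hzx hz hx).resolve_right fun hxz => ?_
    exact hcyc x (((Relation.TransGen.single hxz).tail hzy).tail hyx)
  · exact hcyc y (Relation.TransGen.single (hsub ⟨hyx, hy⟩).1)

theorem injective_witnessLevel (hΓ : IsWitnessDigraph Φ Γ) :
    Function.Injective fun p : Σ x : Γ.X, Φ.dom (Γ.dec x) =>
      ((p.2 : V), witnessLevel Φ Γ p.1 p.2) := by
  rintro ⟨x, v, hx⟩ ⟨y, w, hy⟩ h
  obtain ⟨rfl, hlevel⟩ := Prod.mk.inj h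
  obtain rfl : x = y := by
    by_contra hxy
    rcases hΓ.edge_or_edge_of_mem_dom hxy hx hy with hxy | hyx
    · exact (hΓ.witnessLevel_lt hxy hx hy).ne hlevel
    · exact (hΓ.witnessLevel_lt hyx hy hx).ne' hlevel
  rfl

variable {ρ : Γ.X → ℕ}

theorem rank_ne (hΓ : IsWitnessDigraph Φ Γ) (hρ : ∀ x y, Γ.E x y → ρ x < ρ y) {x y : Γ.X}
    (hxy : x ≠ y) (hdec : Γ.dec x ∈ closedNbhd Φ.depGraph (Γ.dec y)) : ρ x ≠ ρ y := by
  rcases (hΓ.2 x y).mpr ⟨hxy, hdec⟩ with h | h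
  · exact (hρ x y h).ne
  · exact (hρ y x h).ne'

theorem edge_iff_rank_lt (hΓ : IsWitnessDigraph Φ Γ) (hρ : ∀ x y, Γ.E x y → ρ x < ρ y)
    (x y : Γ.X) :
    Γ.E x y ↔ ρ x < ρ y ∧ Γ.dec x ∈ closedNbhd Φ.depGraph (Γ.dec y) := by
  refine ⟨fun h => ⟨hρ x y h, ((hΓ.2 x y).mp (.inl h)).2⟩, fun ⟨hlt, hdec⟩ => ?_⟩
  exact ((hΓ.2 x y).mpr ⟨fun h => hlt.ne (congrArg ρ h), hdec⟩).resolve_right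
    fun h => (hρ y x h).not_gt hlt

theorem injective_dec_rank (hΓ : IsWitnessDigraph Φ Γ) (hρ : ∀ x y, Γ.E x y → ρ x < ρ y) :
    Function.Injective fun x => (Γ.dec x, ρ x) := by
  intro x y h
  obtain ⟨hdec, hrank⟩ := Prod.mk.inj h
  by_contra hxy
  exact hΓ.rank_ne hρ hxy (hdec ▸ Set.mem_insert _ _) hrank

end IsWitnessDigraph

section Layers

variable {V Λ : Type*} {C : Type} {Φ : CSP V Λ C} {Γ : DecoratedDigraph C} {ρ : Γ.X → ℕ}

def DecoratedDigraph.layers (Γ : DecoratedDigraph C) (ρ : Γ.X → ℕ) : ℕ → Set C :=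
  fun n => Γ.dec '' {x | ρ x = n}

theorem DecoratedDigraph.setOf_mem_layers :
    {q : C × ℕ | q.1 ∈ Γ.layers ρ q.2} = Set.range fun x => (Γ.dec x, ρ x) := by
  ext ⟨c, n⟩
  simp [DecoratedDigraph.layers, and_comm]

theorem DecoratedDigraph.finite_layers : {q : C × ℕ | q.1 ∈ Γ.layers ρ q.2}.Finite :=
  DecoratedDigraph.setOf_mem_layers ▸ Set.finite_range _

namespace IsWitnessDigraph

theorem isIndep_layers (hΓ : IsWitnessDigraph Φ Γ) (hρ : ∀ x y, Γ.E x y → ρ x < ρ y) (n : ℕ) :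
    IsIndep Φ.depGraph (Γ.layers ρ n) := by
  rintro _ ⟨x, hx, rfl⟩ _ ⟨y, hy, rfl⟩ hadj
  exact hΓ.rank_ne hρ (fun h => hadj.1 (congrArg Γ.dec h)) (Set.mem_insert_of_mem _ hadj.symm)
    (hx.trans hy.symm)

theorem iso_fullWitness_layers (hΓ : IsWitnessDigraph Φ Γ) (hρ : ∀ x y, Γ.E x y → ρ x < ρ y) :
    Γ.Iso (fullWitness Φ (Γ.layers ρ) DecoratedDigraph.finite_layers) := by
  have hbij : Function.Bijective fun x : Γ.X =>
      (⟨(Γ.dec x, ρ x), DecoratedDigraph.setOf_mem_layers ▸ Set.mem_range_self x⟩ :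
        {q : C × ℕ | q.1 ∈ Γ.layers ρ q.2}) := by
    refine ⟨fun x y h => hΓ.injective_dec_rank hρ (congrArg Subtype.val h), ?_⟩
    rintro ⟨q, hq⟩
    obtain ⟨x, rfl⟩ := (DecoratedDigraph.setOf_mem_layers ▸ hq : q ∈ Set.range _)
    exact ⟨x, rfl⟩
  exact ⟨Equiv.ofBijective _ hbij, hΓ.edge_iff_rank_lt hρ, fun _ => rfl⟩

open scoped Classical in
theorem MTlev_layers (hΓ : IsWitnessDigraph Φ Γ) (hρ : ∀ x y, Γ.E x y → ρ x < ρ y)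
    (n : ℕ) (v : V) :
    MTlev Φ (Γ.layers ρ) n v = {y | ρ y < n ∧ v ∈ Φ.dom (Γ.dec y)}.ncard := by
  induction n with
  | zero => simp [MTlev]
  | succ n ih =>
    have hsplit : {y | ρ y < n + 1 ∧ v ∈ Φ.dom (Γ.dec y)} =
        {y | ρ y < n ∧ v ∈ Φ.dom (Γ.dec y)} ∪ {y | ρ y = n ∧ v ∈ Φ.dom (Γ.dec y)} := by
      ext y
      simp [le_iff_lt_or_eq, or_and_right]
    have hdisj : Disjoint {y | ρ y < n ∧ v ∈ Φ.dom (Γ.dec y)}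
        {y | ρ y = n ∧ v ∈ Φ.dom (Γ.dec y)} :=
      Set.disjoint_left.mpr fun y hlt heq => hlt.1.ne heq.1
    have hstep : {y | ρ y = n ∧ v ∈ Φ.dom (Γ.dec y)}.ncard =
        if ∃ c ∈ Γ.layers ρ n, v ∈ Φ.dom c then 1 else 0 := by
      split_ifs with h
      · obtain ⟨_, ⟨x, hx, rfl⟩, hv⟩ := h
        refine Set.ncard_eq_one.mpr ⟨x, Set.eq_singleton_iff_unique_mem.mpr ⟨⟨hx, hv⟩, ?_⟩⟩
        rintro y ⟨hy, hvy⟩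
        by_contra hyx
        exact hΓ.rank_ne hρ hyx (CSP.mem_closedNbhd_of_mem_dom hvy hv) (hy.trans hx.symm)
      · rw [Set.ncard_eq_zero, Set.eq_empty_iff_forall_notMem]
        rintro y ⟨hy, hvy⟩
        exact h ⟨Γ.dec y, ⟨y, hy, rfl⟩, hvy⟩
    rw [hsplit, Set.ncard_union_eq hdisj, hstep, ← ih]
    rfl

theorem MTlev_layers_rank (hΓ : IsWitnessDigraph Φ Γ) (hρ : ∀ x y, Γ.E x y → ρ x < ρ y)
    {x : Γ.X} {v : V} (hv : v ∈ Φ.dom (Γ.dec x)) :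
    MTlev Φ (Γ.layers ρ) (ρ x) v = witnessLevel Φ Γ x v := by
  rw [hΓ.MTlev_layers hρ, witnessLevel]
  congr 1
  ext y
  simp only [hΓ.edge_iff_rank_lt hρ]
  exact ⟨fun ⟨hlt, hy⟩ => ⟨⟨hlt, CSP.mem_closedNbhd_of_mem_dom hy hv⟩, hy⟩,
    fun ⟨⟨hlt, _⟩, hy⟩ => ⟨hlt, hy⟩⟩

theorem consistent_layers_iff (hΓ : IsWitnessDigraph Φ Γ) (hρ : ∀ x y, Γ.E x y → ρ x < ρ y)
    (t : V → ℕ → Λ) :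
    Φ.Consistent t (Γ.layers ρ) ↔
      ∀ x, (fun v : Φ.dom (Γ.dec x) => t v (witnessLevel Φ Γ x v)) ∈ Φ.Bad (Γ.dec x) := by
  have hstep : ∀ x, Φ.violates (Φ.MTstep t (Γ.layers ρ) (ρ x)) (Γ.dec x) ↔
      (fun v : Φ.dom (Γ.dec x) => t v (witnessLevel Φ Γ x v)) ∈ Φ.Bad (Γ.dec x) := by
    intro x
    have hlev : (fun v : Φ.dom (Γ.dec x) => Φ.MTstep t (Γ.layers ρ) (ρ x) v) =
        fun v : Φ.dom (Γ.dec x) => t v (witnessLevel Φ Γ x v) :=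
      funext fun v => congrArg (t v) (hΓ.MTlev_layers_rank hρ v.2)
    rw [CSP.violates, hlev]
  rw [CSP.Consistent, and_iff_right (hΓ.isIndep_layers hρ)]
  constructor
  · exact fun h x => (hstep x).mp (h _ _ ⟨x, rfl, rfl⟩)
  · rintro h n _ ⟨x, rfl, rfl⟩
    exact (hstep x).mpr (h x)

end IsWitnessDigraph

theorem DecoratedDigraph.eq_layers_of_iso {I : ℕ → Set C}
    (e : Γ.X ≃ {q : C × ℕ | q.1 ∈ I q.2}) (hdec : ∀ x, (e x : C × ℕ).1 = Γ.dec x) :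
    I = Γ.layers fun x => (e x : C × ℕ).2 := by
  ext n c
  refine ⟨fun hc => ⟨e.symm ⟨(c, n), hc⟩, ?_, ?_⟩, ?_⟩
  · simp
  · simpa using (hdec (e.symm ⟨(c, n), hc⟩)).symm
  · rintro ⟨x, rfl, rfl⟩
    exact hdec x ▸ (e x).2

theorem IsWitnessDigraph.compatibleWith_iff (hΓ : IsWitnessDigraph Φ Γ) (t : V → ℕ → Λ) :
    CompatibleWith Φ t Γ ↔
      ∀ x, (fun v : Φ.dom (Γ.dec x) => t v (witnessLevel Φ Γ x v)) ∈ Φ.Bad (Γ.dec x) := by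
  constructor
  · rintro ⟨I, _, hcons, e, hE, hdec⟩
    let e' : Γ.X ≃ {q : C × ℕ | q.1 ∈ I q.2} := e
    have hρ : ∀ x y, Γ.E x y → (e' x : C × ℕ).2 < (e' y : C × ℕ).2 :=
      fun x y h => ((hE x y).mp h).1
    rw [DecoratedDigraph.eq_layers_of_iso e' hdec] at hcons
    exact (hΓ.consistent_layers_iff hρ t).mp hcons
  · intro hbad
    obtain ⟨ρ, hρ⟩ := hΓ.1.exists_rank
    exact ⟨Γ.layers ρ, DecoratedDigraph.finite_layers, (hΓ.consistent_layers_iff hρ t).mpr hbad,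
      hΓ.iso_fullWitness_layers hρ⟩

end Layers

theorem first_fundamental_theorem_general
    {V Λ : Type*} {C : Type} [MeasurableSpace Λ]
    (Φ : CSP V Λ C) (P : Measure Λ) [IsProbabilityMeasure P]
    (hmeas : ∀ c, MeasurableSet (Φ.Bad c))
    (Q : Measure ((V × ℕ) → Λ)) (hQ : IsProductOf Q P)
    (Γ : DecoratedDigraph C) (hΓ : IsWitnessDigraph Φ Γ) :
    Q {t : (V × ℕ) → Λ | CompatibleWith Φ (fun v n => t (v, n)) Γ} =
      ∏ x : Γ.X, Φ.badProb P (Γ.dec x) := by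
  -- the `Fintype` instances that `CSP.badProb` uses
  let (x : Γ.X) : Fintype (Φ.dom (Γ.dec x)) := (Φ.dom_finite (Γ.dec x)).fintype
  have hevent : {t : (V × ℕ) → Λ | CompatibleWith Φ (fun v n => t (v, n)) Γ} =
      {t | ∀ x, (fun v : Φ.dom (Γ.dec x) => t (v, witnessLevel Φ Γ x v)) ∈ Φ.Bad (Γ.dec x)} :=
    Set.ext fun t => hΓ.compatibleWith_iff _
  rw [hevent, hQ.measure_forall_mem_eq_prod hΓ.injective_witnessLevel fun x => hmeas _]
  rfl

/-- **First Fundamental Theorem of Moser–Tardos theory.** For a random table `t` sampled from the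
product space `(Λ^{V×ℕ}, P^{V×ℕ})` and any witness digraph `Γ`, the probability that `Γ` is
compatible with `(Φ, t)` equals `∏_{x ∈ V(Γ)} P[Bad(δ(x))]`. -/
theorem first_fundamental_theorem
    {V Λ : Type*} {C : Type} [MeasurableSpace Λ] [StandardBorelSpace Λ]
    (Φ : CSP V Λ C) (P : Measure Λ) [IsProbabilityMeasure P]
    (hlf : ∀ c, (Φ.depGraph.neighborSet c).Finite)
    (hmeas : ∀ c, MeasurableSet (Φ.Bad c))
    (Q : Measure ((V × ℕ) → Λ)) (hQ : IsProductOf Q P)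
    (Γ : DecoratedDigraph C) (hΓ : IsWitnessDigraph Φ Γ) :
    Q {t : (V × ℕ) → Λ | CompatibleWith Φ (fun v n => t (v, n)) Γ} =
      ∏ x : Γ.X, Φ.badProb P (Γ.dec x) :=
  first_fundamental_theorem_general Φ P hmeas Q hQ Γ hΓ
end

section
/- (Second Fundamental Theorem of Moser–Tardos theory.) Let C be the constraint set of a CSP with locally finite dependency graph D, and let N(c) (resp. N[c]) denote the open (resp. closed) neighborhood of c in D. Suppose α, β : C → [0,1) are functions such that for all c ∈ C, α(c) ≤ β(c)·∏_{c' ∈ N(c)} (1 − β(c')). Then for each c ∈ C, Σ_{Γ ∈ Sink*(c)} ∏_{x ∈ V(Γ)} α(δ(x)) ≤ β(c)/(1 − β(c)). -/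
open MeasureTheory Set
open scoped ENNReal

section SFTaux

open Finset
open scoped Classical

namespace SFT

variable {C : Type} (G : SimpleGraph C)

/-- Closed neighborhood as a finset. -/
noncomputable def clF (hlf : ∀ a, (G.neighborSet a).Finite) (a : C) : Finset C :=
  insert a (hlf a).toFinset

/-- Closed neighborhood of a finset. -/
noncomputable def NJ (hlf : ∀ a, (G.neighborSet a).Finite) (J : Finset C) : Finset C :=
  J.biUnion (clF G hlf)

/-- The admissibility relation between consecutive levels. -/
def ok (J K : Finset C) : Prop :=
  K.Nonempty ∧ ∀ a ∈ K, ∃ b ∈ J, a ∈ closedNbhd G b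

lemma mem_clF {hlf : ∀ a, (G.neighborSet a).Finite} {a b : C}
    (h : a ∈ closedNbhd G b) : a ∈ clF G hlf b := by
  rw [closedNbhd, Set.mem_insert_iff] at h
  rcases h with rfl | h
  · exact Finset.mem_insert_self _ _
  · exact Finset.mem_insert_of_mem ((hlf b).mem_toFinset.mpr h)

lemma ok_subset {hlf : ∀ a, (G.neighborSet a).Finite} {J K : Finset C}
    (h : ok G J K) : K ⊆ NJ G hlf J := by
  intro a ha
  obtain ⟨b, hb, hab⟩ := h.2 a ha
  exact Finset.mem_biUnion.mpr ⟨b, hb, mem_clF G hab⟩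

variable (α β : C → ℝ)

/-- Weight of a level. -/
noncomputable def wA (J : Finset C) : ℝ≥0∞ := ∏ a ∈ J, ENNReal.ofReal (α a)

/-- Weight of a list of levels starting from `J`, with validity indicators. -/
noncomputable def wL : Finset C → List (Finset C) → ℝ≥0∞
  | J, [] => wA α J
  | J, K :: L => wA α J * (if ok G J K then wL K L else 0)

/-- The truncated total weight of all level lists of length `≤ n` starting at `J`. -/
noncomputable def T (hlf : ∀ a, (G.neighborSet a).Finite) : ℕ → Finset C → ℝ≥0∞
  | 0, J => wA α J
  | n + 1, J => wA α J *
      (1 + ∑ K ∈ (NJ G hlf J).powerset, if ok G J K then T hlf n K else 0)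

/-- The target bound. -/
noncomputable def Bd (J : Finset C) : ℝ≥0∞ :=
  ∏ a ∈ J, ENNReal.ofReal (β a) * (1 - ENNReal.ofReal (β a))⁻¹

variable {β}

lemma bb_lt_one (hβ : ∀ a, 0 ≤ β a ∧ β a < 1) (a : C) : ENNReal.ofReal (β a) < 1 := by
  rw [← ENNReal.ofReal_one]
  exact (ENNReal.ofReal_lt_ofReal_iff_of_nonneg (hβ a).1).mpr (hβ a).2

lemma one_sub_bb_ne_zero (hβ : ∀ a, 0 ≤ β a ∧ β a < 1) (a : C) :
    (1 : ℝ≥0∞) - ENNReal.ofReal (β a) ≠ 0 := by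
  have := bb_lt_one hβ a
  simp only [ne_eq, tsub_eq_zero_iff_le, not_le]
  exact this

lemma one_sub_bb_ne_top (a : C) : (1 : ℝ≥0∞) - ENNReal.ofReal (β a) ≠ ⊤ :=
  (lt_of_le_of_lt tsub_le_self (by norm_num)).ne

lemma mul_inv_cancel_bb (hβ : ∀ a, 0 ≤ β a ∧ β a < 1) (a : C) :
    ((1 : ℝ≥0∞) - ENNReal.ofReal (β a)) * (1 - ENNReal.ofReal (β a))⁻¹ = 1 :=
  ENNReal.mul_inv_cancel (one_sub_bb_ne_zero hβ a) (one_sub_bb_ne_top a)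

lemma ofReal_one_sub_bb (hβ : ∀ a, 0 ≤ β a ∧ β a < 1) (a : C) :
    ENNReal.ofReal (1 - β a) = 1 - ENNReal.ofReal (β a) := by
  rw [ENNReal.ofReal_sub _ (hβ a).1, ENNReal.ofReal_one]

variable {α G}

/-- Pointwise bound coming from the LLL-condition. -/
lemma wA_le (hlf : ∀ a, (G.neighborSet a).Finite)
    (hβ : ∀ a, 0 ≤ β a ∧ β a < 1)
    (hcond : ∀ a, α a ≤ β a * ∏ b ∈ (hlf a).toFinset, (1 - β b)) (J : Finset C) :
    wA α J ≤ Bd β J * ∏ a ∈ J, ∏ b ∈ clF G hlf a, (1 - ENNReal.ofReal (β b)) := by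
  rw [Bd, ← Finset.prod_mul_distrib]
  refine Finset.prod_le_prod' fun a _ => ?_
  have h1 : ENNReal.ofReal (α a) ≤
      ENNReal.ofReal (β a) * ∏ b ∈ (hlf a).toFinset, (1 - ENNReal.ofReal (β b)) := by
    calc ENNReal.ofReal (α a) ≤ ENNReal.ofReal (β a * ∏ b ∈ (hlf a).toFinset, (1 - β b)) :=
          ENNReal.ofReal_le_ofReal (hcond a)
    _ = ENNReal.ofReal (β a) * ∏ b ∈ (hlf a).toFinset, (1 - ENNReal.ofReal (β b)) := by
        rw [ENNReal.ofReal_mul (hβ a).1, ENNReal.ofReal_prod_of_nonneg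
          (fun b _ => by linarith [(hβ b).1, (hβ b).2])]
        simp_rw [ofReal_one_sub_bb hβ]
  refine h1.trans (le_of_eq ?_)
  have hself : a ∉ (hlf a).toFinset := by
    simp [Set.Finite.mem_toFinset, SimpleGraph.mem_neighborSet]
  rw [clF, Finset.prod_insert hself]
  calc ENNReal.ofReal (β a) * ∏ b ∈ (hlf a).toFinset, (1 - ENNReal.ofReal (β b))
      = ENNReal.ofReal (β a) * (((1 - ENNReal.ofReal (β a)) * (1 - ENNReal.ofReal (β a))⁻¹) *
        ∏ b ∈ (hlf a).toFinset, (1 - ENNReal.ofReal (β b))) := by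
        rw [mul_inv_cancel_bb hβ a, one_mul]
    _ = ENNReal.ofReal (β a) * (1 - ENNReal.ofReal (β a))⁻¹ *
        ((1 - ENNReal.ofReal (β a)) * ∏ b ∈ (hlf a).toFinset, (1 - ENNReal.ofReal (β b))) := by
        ring

/-- Counting multiplicities: product over the union vs product of products. -/
lemma prodprod_le (hlf : ∀ a, (G.neighborSet a).Finite) (J : Finset C) :
    ∏ a ∈ J, ∏ b ∈ clF G hlf a, (1 - ENNReal.ofReal (β b)) ≤
      ∏ b ∈ NJ G hlf J, (1 - ENNReal.ofReal (β b)) := by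
  classical
  induction J using Finset.induction_on with
  | empty => simp [NJ]
  | @insert a J ha ih =>
    rw [Finset.prod_insert ha, NJ, Finset.biUnion_insert]
    set g : C → ℝ≥0∞ := fun b => 1 - ENNReal.ofReal (β b) with hg
    have hgle : ∀ b, g b ≤ 1 := fun b => tsub_le_self
    calc (∏ b ∈ clF G hlf a, g b) * ∏ a' ∈ J, ∏ b ∈ clF G hlf a', g b
        ≤ (∏ b ∈ clF G hlf a, g b) * ∏ b ∈ NJ G hlf J, g b :=
          mul_le_mul_right ih _
      _ ≤ (∏ b ∈ clF G hlf a, g b) * ∏ b ∈ NJ G hlf J \ clF G hlf a, g b := by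
          refine mul_le_mul_right ?_ _
          rw [← Finset.prod_sdiff (Finset.inter_subset_left (s₁ := NJ G hlf J)
            (s₂ := clF G hlf a)), Finset.sdiff_inter_self_left]
          exact le_trans (mul_le_mul_right (Finset.prod_le_one' fun b _ => hgle b) _)
            (le_of_eq (mul_one _))
      _ = ∏ b ∈ clF G hlf a ∪ NJ G hlf J, g b := by
          rw [← Finset.prod_union Finset.disjoint_sdiff, Finset.union_sdiff_self_eq_union]

lemma Bd_empty : Bd β (∅ : Finset C) = 1 := by simp [Bd]

lemma one_add_f (hβ : ∀ a, 0 ≤ β a ∧ β a < 1) (b : C) :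
    1 + ENNReal.ofReal (β b) * (1 - ENNReal.ofReal (β b))⁻¹
      = (1 - ENNReal.ofReal (β b))⁻¹ := by
  nth_rewrite 1 [← mul_inv_cancel_bb hβ b]
  rw [← add_mul, tsub_add_cancel_of_le (le_of_lt (bb_lt_one hβ b)), one_mul]

/-- The key single-step inequality. -/
lemma key (hlf : ∀ a, (G.neighborSet a).Finite)
    (hβ : ∀ a, 0 ≤ β a ∧ β a < 1)
    (hcond : ∀ a, α a ≤ β a * ∏ b ∈ (hlf a).toFinset, (1 - β b)) (J : Finset C) :
    wA α J * (1 + ∑ K ∈ (NJ G hlf J).powerset, if ok G J K then Bd β K else 0) ≤ Bd β J := by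
  have h1 : 1 + ∑ K ∈ (NJ G hlf J).powerset, (if ok G J K then Bd β K else 0) ≤
      ∑ K ∈ (NJ G hlf J).powerset, Bd β K := by
    have hmem : (∅ : Finset C) ∈ (NJ G hlf J).powerset := Finset.empty_mem_powerset _
    rw [← Finset.add_sum_erase _ (fun K => Bd β K) hmem, Bd_empty]
    refine add_le_add_right ?_ 1
    rw [← Finset.add_sum_erase _ (fun K => if ok G J K then Bd β K else 0) hmem]
    have h0 : (if ok G J (∅ : Finset C) then Bd β (∅ : Finset C) else 0) = 0 := by
      simp [ok]
    rw [h0, zero_add]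
    exact Finset.sum_le_sum fun K _ => by split <;> simp
  have h2 : ∑ K ∈ (NJ G hlf J).powerset, Bd β K =
      ∏ b ∈ NJ G hlf J,
        (ENNReal.ofReal (β b) * (1 - ENNReal.ofReal (β b))⁻¹ + 1) := by
    rw [Finset.prod_add]
    refine Finset.sum_congr rfl fun K _ => ?_
    simp [Bd]
  calc wA α J * (1 + ∑ K ∈ (NJ G hlf J).powerset, if ok G J K then Bd β K else 0)
      ≤ wA α J * ∑ K ∈ (NJ G hlf J).powerset, Bd β K := mul_le_mul_right h1 _
    _ = wA α J * ∏ b ∈ NJ G hlf J, (1 - ENNReal.ofReal (β b))⁻¹ := by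
        rw [h2]
        congr 1
        refine Finset.prod_congr rfl fun b _ => ?_
        rw [add_comm, one_add_f hβ b]
    _ ≤ (Bd β J * ∏ a ∈ J, ∏ b ∈ clF G hlf a, (1 - ENNReal.ofReal (β b))) *
        ∏ b ∈ NJ G hlf J, (1 - ENNReal.ofReal (β b))⁻¹ :=
        mul_le_mul_left (wA_le hlf hβ hcond J) _
    _ ≤ (Bd β J * ∏ b ∈ NJ G hlf J, (1 - ENNReal.ofReal (β b))) *
        ∏ b ∈ NJ G hlf J, (1 - ENNReal.ofReal (β b))⁻¹ :=
        mul_le_mul_left (mul_le_mul_right (prodprod_le hlf J) _) _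
    _ = Bd β J * ∏ b ∈ NJ G hlf J,
          ((1 - ENNReal.ofReal (β b)) * (1 - ENNReal.ofReal (β b))⁻¹) := by
        rw [mul_assoc, ← Finset.prod_mul_distrib]
    _ = Bd β J := by
        rw [Finset.prod_congr rfl fun b _ => mul_inv_cancel_bb hβ b]
        simp

lemma T_le_Bd (hlf : ∀ a, (G.neighborSet a).Finite)
    (hβ : ∀ a, 0 ≤ β a ∧ β a < 1)
    (hcond : ∀ a, α a ≤ β a * ∏ b ∈ (hlf a).toFinset, (1 - β b)) (n : ℕ) :
    ∀ J : Finset C, T G α hlf n J ≤ Bd β J := by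
  induction n with
  | zero =>
    intro J
    refine le_trans ?_ (key hlf hβ hcond J)
    calc T G α hlf 0 J = wA α J * 1 := (mul_one _).symm
      _ ≤ _ := mul_le_mul_right le_self_add _
  | succ n ih =>
    intro J
    refine le_trans ?_ (key hlf hβ hcond J)
    simp only [T]
    refine mul_le_mul_right (add_le_add_right (Finset.sum_le_sum fun K _ => ?_) 1) _
    split
    · exact ih K
    · exact le_rfl

lemma sum_wL_le_T (hlf : ∀ a, (G.neighborSet a).Finite) (n : ℕ) :
    ∀ (J : Finset C) (s : Finset (List (Finset C))), (∀ L ∈ s, L.length ≤ n) →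
      ∑ L ∈ s, wL G α J L ≤ T G α hlf n J := by
  induction n with
  | zero =>
    intro J s hs
    have hsub : s ⊆ {([] : List (Finset C))} := by
      intro L hL
      rw [Finset.mem_singleton]
      exact List.length_eq_zero_iff.mp (Nat.le_zero.mp (hs L hL))
    calc ∑ L ∈ s, wL G α J L ≤ ∑ L ∈ {([] : List (Finset C))}, wL G α J L :=
        Finset.sum_le_sum_of_subset hsub
      _ = wA α J := by simp [wL]
      _ = T G α hlf 0 J := rfl
  | succ n ih =>
    intro J s hs
    have h0 : ∑ L ∈ s, wL G α J L ≤ ∑ L ∈ insert [] s, wL G α J L :=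
      Finset.sum_le_sum_of_subset (Finset.subset_insert _ _)
    set s' := (insert ([] : List (Finset C)) s).erase [] with hs'
    have hrec : ∑ L ∈ insert ([] : List (Finset C)) s, wL G α J L
        = wL G α J [] + ∑ L ∈ s', wL G α J L :=
      (Finset.add_sum_erase _ _ (Finset.mem_insert_self _ _)).symm
    have hmem : ∀ L ∈ s', L ≠ [] ∧ L.length ≤ n + 1 := by
      intro L hL
      have h1 := Finset.ne_of_mem_erase hL
      have h2 := Finset.mem_of_mem_erase hL
      rcases Finset.mem_insert.mp h2 with h | h
      · exact absurd h h1
      · exact ⟨h1, hs L h⟩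
    have hfib : ∑ L ∈ s', wL G α J L =
        ∑ K ∈ s'.image List.headI, ∑ L ∈ s'.filter (fun L => L.headI = K), wL G α J L :=
      (Finset.sum_fiberwise_of_maps_to (fun L hL => Finset.mem_image_of_mem _ hL) _).symm
    have hinner : ∀ K ∈ s'.image List.headI,
        ∑ L ∈ s'.filter (fun L => L.headI = K), wL G α J L ≤
          wA α J * (if ok G J K then T G α hlf n K else 0) := by
      intro K _
      have hcons : ∀ L ∈ s'.filter (fun L => L.headI = K), L = K :: L.tail := by
        intro L hL
        obtain ⟨hL1, hL2⟩ := Finset.mem_filter.mp hL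
        obtain ⟨hne, _⟩ := hmem L hL1
        cases L with
        | nil => exact absurd rfl hne
        | cons a M => simp_all [List.headI]
      have hcongr : ∑ L ∈ s'.filter (fun L => L.headI = K), wL G α J L =
          ∑ L ∈ s'.filter (fun L => L.headI = K),
            wA α J * (if ok G J K then wL G α K L.tail else 0) := by
        refine Finset.sum_congr rfl fun L hL => ?_
        conv_lhs => rw [hcons L hL]
        simp only [wL]
      rw [hcongr, ← Finset.mul_sum]
      refine mul_le_mul_right ?_ _
      by_cases hok : ok G J K
      · simp only [if_pos hok]
        have htail : ∑ L ∈ s'.filter (fun L => L.headI = K), wL G α K L.tail =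
            ∑ M ∈ (s'.filter (fun L => L.headI = K)).image List.tail, wL G α K M := by
          refine (Finset.sum_image ?_).symm
          intro L1 h1 L2 h2 he
          rw [hcons L1 h1, hcons L2 h2, he]
        rw [htail]
        refine ih K _ ?_
        intro M hM
        obtain ⟨L, hL, rfl⟩ := Finset.mem_image.mp hM
        obtain ⟨hL1, _⟩ := Finset.mem_filter.mp hL
        have hlen := (hmem L hL1).2
        have hlt : L.tail.length = L.length - 1 := List.length_tail (l := L)
        omega
      · simp [hok]
    have hheads : ∑ K ∈ s'.image List.headI,
          wA α J * (if ok G J K then T G α hlf n K else 0) ≤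
        ∑ K ∈ (NJ G hlf J).powerset,
          wA α J * (if ok G J K then T G α hlf n K else 0) := by
      rw [← Finset.sum_filter_of_ne
        (p := fun K => ok G J K)
        (f := fun K => wA α J * (if ok G J K then T G α hlf n K else 0)) ?_]
      · refine Finset.sum_le_sum_of_subset ?_
        intro K hK
        obtain ⟨_, hK2⟩ := Finset.mem_filter.mp hK
        exact Finset.mem_powerset.mpr (ok_subset G hK2)
      · intro K _ hne
        by_contra hok
        simp only [if_neg hok, mul_zero] at hne
        exact hne rfl
    calc ∑ L ∈ s, wL G α J L ≤ wL G α J [] + ∑ L ∈ s', wL G α J L := h0.trans (le_of_eq hrec)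
      _ ≤ wA α J + ∑ K ∈ (NJ G hlf J).powerset,
            wA α J * (if ok G J K then T G α hlf n K else 0) := by
          refine add_le_add (le_of_eq (by simp [wL])) ?_
          rw [hfib]
          exact le_trans (Finset.sum_le_sum hinner) hheads
      _ = wA α J * (1 + ∑ K ∈ (NJ G hlf J).powerset,
            if ok G J K then T G α hlf n K else 0) := by
          rw [mul_add, mul_one, Finset.mul_sum]
      _ = T G α hlf (n + 1) J := by simp only [T]

/-! ### Heights on acyclic decorated digraphs -/

/-- Existence of a directed path of length `k` starting at `x`. -/
def pathsP (Γ : DecoratedDigraph C) (x : Γ.X) (k : ℕ) : Prop :=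
  ∃ f : ℕ → Γ.X, f 0 = x ∧ ∀ i < k, Γ.E (f i) (f (i + 1))

variable {Γ : DecoratedDigraph C}

lemma pathsP_zero (x : Γ.X) : pathsP Γ x 0 :=
  ⟨fun _ => x, rfl, fun i h => absurd h (Nat.not_lt_zero i)⟩

lemma pathsP_lt_card (hac : Γ.Acyclic) {x : Γ.X} {k : ℕ} (h : pathsP Γ x k) :
    k < Fintype.card Γ.X := by
  by_contra hk
  push_neg at hk
  obtain ⟨f, hf0, hf⟩ := h
  have hcard : Fintype.card Γ.X < Fintype.card (Fin (k + 1)) := by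
    simpa using Nat.lt_succ_of_le hk
  obtain ⟨i, j, hij, he⟩ := Fintype.exists_ne_map_eq_of_card_lt
    (fun i : Fin (k + 1) => f i) hcard
  have key : ∀ a b : ℕ, a < b → b ≤ k → f a = f b → False := by
    intro a b hab hbk hfe
    refine absurd ?_ (hac (b - a) (fun m => f (a + m)) (by omega) (fun m hm => ?_))
    · show f (a + 0) = f (a + (b - a))
      rw [Nat.add_zero, show a + (b - a) = b from by omega]
      exact hfe
    · show Γ.E (f (a + m)) (f (a + (m + 1)))
      rw [show a + (m + 1) = (a + m) + 1 from by omega]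
      exact hf (a + m) (by omega)
  have hij' : (i : ℕ) ≠ (j : ℕ) := fun hv => hij (Fin.ext hv)
  rcases lt_or_gt_of_ne hij' with h' | h'
  · exact key i j h' (Nat.lt_succ_iff.mp j.isLt) he
  · exact key j i h' (Nat.lt_succ_iff.mp i.isLt) he.symm

/-- The height of a vertex: the length of the longest directed path starting there. -/
noncomputable def ht (Γ : DecoratedDigraph C) (x : Γ.X) : ℕ :=
  Nat.findGreatest (pathsP Γ x) (Fintype.card Γ.X)

lemma pathsP_ht (x : Γ.X) : pathsP Γ x (ht Γ x) :=
  Nat.findGreatest_spec (Nat.zero_le _) (pathsP_zero x)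

lemma le_ht (hac : Γ.Acyclic) {x : Γ.X} {k : ℕ} (h : pathsP Γ x k) : k ≤ ht Γ x :=
  Nat.le_findGreatest (le_of_lt (pathsP_lt_card hac h)) h

lemma pathsP_succ {x y : Γ.X} (e : Γ.E x y) {k : ℕ} (h : pathsP Γ y k) :
    pathsP Γ x (k + 1) := by
  obtain ⟨f, hf0, hf⟩ := h
  refine ⟨fun n => Nat.casesOn n x f, rfl, ?_⟩
  intro i hi
  cases i with
  | zero => simpa [hf0] using e
  | succ m => exact hf m (by omega)

lemma ht_lt (hac : Γ.Acyclic) {x y : Γ.X} (e : Γ.E x y) : ht Γ y < ht Γ x :=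
  Nat.lt_of_lt_of_le (Nat.lt_succ_self _) (le_ht hac (pathsP_succ e (pathsP_ht y)))

lemma exists_next (hac : Γ.Acyclic) {x : Γ.X} (h : 0 < ht Γ x) :
    ∃ y, Γ.E x y ∧ ht Γ y = ht Γ x - 1 := by
  obtain ⟨f, hf0, hf⟩ := pathsP_ht (Γ := Γ) x
  have e : Γ.E x (f 1) := by have h1 := hf 0 h; rwa [hf0] at h1
  have h1 : pathsP Γ (f 1) (ht Γ x - 1) :=
    ⟨fun n => f (n + 1), rfl, fun i hi => hf (i + 1) (by omega)⟩
  have h2 : ht Γ x - 1 ≤ ht Γ (f 1) := le_ht hac h1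
  have h3 : ht Γ (f 1) < ht Γ x := ht_lt hac e
  exact ⟨f 1, e, by omega⟩

lemma ht_sink (hac : Γ.Acyclic) {σ : Γ.X} (hσ : ∀ y, ¬ Γ.E σ y) : ht Γ σ = 0 := by
  by_contra h
  obtain ⟨y, e, _⟩ := exists_next hac (Nat.pos_of_ne_zero h)
  exact hσ y e

lemma sink_of_ht_zero (hac : Γ.Acyclic) {x : Γ.X} (h : ht Γ x = 0) : ∀ y, ¬ Γ.E x y :=
  fun y e => absurd (ht_lt hac e) (by omega)

section Witness

variable (hac : Γ.Acyclic)
variable (hcmp : ∀ x y : Γ.X,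
  (Γ.E x y ∨ Γ.E y x) ↔ x ≠ y ∧ Γ.dec x ∈ closedNbhd G (Γ.dec y))

include hac hcmp

lemma E_iff {x y : Γ.X} :
    Γ.E x y ↔ Γ.dec x ∈ closedNbhd G (Γ.dec y) ∧ ht Γ y < ht Γ x := by
  constructor
  · intro e
    exact ⟨((hcmp x y).mp (Or.inl e)).2, ht_lt hac e⟩
  · rintro ⟨hd, hlt⟩
    have hne : x ≠ y := fun h => absurd hlt (by rw [h]; exact lt_irrefl _)
    rcases (hcmp x y).mpr ⟨hne, hd⟩ with e | e
    · exact e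
    · exact absurd (ht_lt hac e) (by omega)

lemma dec_inj {x y : Γ.X} (h1 : ht Γ x = ht Γ y) (h2 : Γ.dec x = Γ.dec y) : x = y := by
  by_contra hne
  have hd : Γ.dec x ∈ closedNbhd G (Γ.dec y) := by
    rw [h2]; exact Set.mem_insert _ _
  rcases (hcmp x y).mpr ⟨hne, hd⟩ with e | e
  · exact absurd (ht_lt hac e) (by omega)
  · exact absurd (ht_lt hac e) (by omega)

end Witness

/-- The level sets of a decorated digraph, as finsets of decorations. -/
noncomputable def levels (Γ : DecoratedDigraph C) (i : ℕ) : Finset C :=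
  (Finset.univ.filter (fun x => ht Γ x = i)).image Γ.dec

/-- The maximal height. -/
noncomputable def maxht (Γ : DecoratedDigraph C) : ℕ := Finset.univ.sup (ht Γ)

lemma ht_le_maxht (x : Γ.X) : ht Γ x ≤ maxht Γ := Finset.le_sup (Finset.mem_univ x)

lemma levels_empty {i : ℕ} (hi : maxht Γ < i) : levels Γ i = ∅ := by
  rw [levels, Finset.image_eq_empty, Finset.filter_eq_empty_iff]
  intro x _
  have := ht_le_maxht x
  omega

lemma exists_ht_eq (hac : Γ.Acyclic) :
    ∀ (n : ℕ) (x : Γ.X), ht Γ x = n → ∀ i ≤ n, ∃ y, ht Γ y = i := by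
  intro n
  induction n with
  | zero => intro x hx i hi; exact ⟨x, by omega⟩
  | succ n ihn =>
    intro x hx i hi
    rcases Nat.eq_or_lt_of_le hi with rfl | hlt
    · exact ⟨x, hx⟩
    · obtain ⟨y, _, hy⟩ := exists_next hac (by omega : 0 < ht Γ x)
      exact ihn y (by omega) i (by omega)

lemma levels_nonempty (hac : Γ.Acyclic) (x0 : Γ.X) {i : ℕ} (hi : i ≤ maxht Γ) :
    (levels Γ i).Nonempty := by
  obtain ⟨x, _, hx⟩ := Finset.exists_mem_eq_sup Finset.univ ⟨x0, Finset.mem_univ x0⟩ (ht Γ)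
  have hx' : maxht Γ = ht Γ x := hx
  obtain ⟨y, hy⟩ := exists_ht_eq hac (ht Γ x) x rfl i (by omega)
  exact ⟨Γ.dec y, Finset.mem_image.mpr ⟨y, Finset.mem_filter.mpr ⟨Finset.mem_univ y, hy⟩, rfl⟩⟩

section Witness2

variable (hac : Γ.Acyclic)
variable (hcmp : ∀ x y : Γ.X,
  (Γ.E x y ∨ Γ.E y x) ↔ x ≠ y ∧ Γ.dec x ∈ closedNbhd G (Γ.dec y))

include hac hcmp

lemma levels_cover {i : ℕ} :
    ∀ a ∈ levels Γ (i + 1), ∃ b ∈ levels Γ i, a ∈ closedNbhd G b := by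
  intro a ha
  obtain ⟨x, hx, rfl⟩ := Finset.mem_image.mp ha
  have hxi : ht Γ x = i + 1 := (Finset.mem_filter.mp hx).2
  obtain ⟨y, e, hy⟩ := exists_next hac (by omega : 0 < ht Γ x)
  refine ⟨Γ.dec y, Finset.mem_image.mpr
    ⟨y, Finset.mem_filter.mpr ⟨Finset.mem_univ y, by omega⟩, rfl⟩, ?_⟩
  exact ((hcmp x y).mp (Or.inl e)).2

lemma ok_levels {i : ℕ} (hne : (levels Γ (i + 1)).Nonempty) :
    ok G (levels Γ i) (levels Γ (i + 1)) :=
  ⟨hne, levels_cover hac hcmp⟩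

omit hcmp in
lemma levels_zero {c : C} (hσ : HasUniqueSinkAt Γ c) : levels Γ 0 = {c} := by
  obtain ⟨σ, hσ1, hσ2, hσ3⟩ := hσ
  ext a
  simp only [levels, Finset.mem_image, Finset.mem_filter, Finset.mem_univ, true_and,
    Finset.mem_singleton]
  constructor
  · rintro ⟨x, hx, rfl⟩
    rw [hσ3 x (sink_of_ht_zero hac hx)]
    exact hσ2
  · rintro rfl
    exact ⟨σ, ht_sink hac hσ1, hσ2⟩

end Witness2

/-- The level list of a decorated digraph (levels `1, …, maxht`). -/
noncomputable def theList (Γ : DecoratedDigraph C) : List (Finset C) :=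
  (List.range (maxht Γ)).map (fun i => levels Γ (i + 1))

lemma theList_length : (theList Γ).length = maxht Γ := by simp [theList]

lemma theList_get {i : ℕ} (h : i < (theList Γ).length) :
    (theList Γ).get ⟨i, h⟩ = levels Γ (i + 1) := by
  simp [theList]

lemma chain_iff_get_aux {R : Finset C → Finset C → Prop} {a : Finset C} {l : List (Finset C)} :
    List.Chain R a l ↔ (∀ h : 0 < l.length, R a (l.get ⟨0, h⟩)) ∧
      ∀ (i : ℕ) (h : i < l.length - 1), R (l.get ⟨i, by omega⟩) (l.get ⟨i + 1, by omega⟩) := by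
  simp only [List.Chain, List.isChain_iff_getElem, List.length_cons, List.get_eq_getElem]
  constructor
  · intro h
    exact ⟨fun h0 => h 0 (by omega), fun i hi => h (i + 1) (by omega)⟩
  · rintro ⟨h0, h1⟩ i hi
    cases i with
    | zero => exact h0 (by omega)
    | succ i => exact h1 i (by omega)

section Witness3

variable (hac : Γ.Acyclic)
variable (hcmp : ∀ x y : Γ.X,
  (Γ.E x y ∨ Γ.E y x) ↔ x ≠ y ∧ Γ.dec x ∈ closedNbhd G (Γ.dec y))

include hac hcmp

lemma chain_theList {c : C} (hσ : HasUniqueSinkAt Γ c) :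
    List.Chain (ok G) ({c} : Finset C) (theList Γ) := by
  rw [chain_iff_get_aux]
  constructor
  · intro h
    rw [theList_get]
    rw [← levels_zero hac hσ]
    refine ok_levels hac hcmp (levels_nonempty hac hσ.choose ?_)
    have := h
    rw [theList_length] at this
    omega
  · intro i h
    rw [theList_get, theList_get]
    refine ok_levels hac hcmp (levels_nonempty hac hσ.choose ?_)
    rw [theList_length] at h
    omega

end Witness3

lemma wL_chain (G : SimpleGraph C) (α : C → ℝ) : ∀ (L : List (Finset C)) (J : Finset C),
    List.Chain (ok G) J L → wL G α J L = wA α J * (L.map (wA α)).prod := by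
  intro L
  induction L with
  | nil => intro J _; simp [wL]
  | cons K L ihL =>
    intro J hch
    rw [List.Chain, List.isChain_cons_cons] at hch
    simp only [wL, if_pos hch.1, ihL K hch.2, List.map_cons, List.prod_cons]

lemma prod_list_range (f : ℕ → ℝ≥0∞) (n : ℕ) :
    ((List.range n).map f).prod = ∏ i ∈ Finset.range n, f i := by
  induction n with
  | zero => simp
  | succ n ih =>
    rw [List.range_succ, List.map_append, List.prod_append, Finset.prod_range_succ, ih]
    simp

section Witness4

variable (hac : Γ.Acyclic)
variable (hcmp : ∀ x y : Γ.X,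
  (Γ.E x y ∨ Γ.E y x) ↔ x ≠ y ∧ Γ.dec x ∈ closedNbhd G (Γ.dec y))

include hac hcmp

lemma weight_eq {c : C} (hσ : HasUniqueSinkAt Γ c) (α : C → ℝ) :
    wL G α ({c} : Finset C) (theList Γ) = ∏ x : Γ.X, ENNReal.ofReal (α (Γ.dec x)) := by
  rw [wL_chain G α _ _ (chain_theList hac hcmp hσ), theList, List.map_map, prod_list_range]
  have h0 : wA α ({c} : Finset C) = wA α (levels Γ 0) := by rw [levels_zero hac hσ]
  rw [h0]
  calc wA α (levels Γ 0) * ∏ i ∈ Finset.range (maxht Γ),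
        ((wA α ∘ fun i => levels Γ (i + 1)) i)
      = ∏ i ∈ Finset.range (maxht Γ + 1), wA α (levels Γ i) := by
        rw [Finset.prod_range_succ']
        simp only [Function.comp]
        ring
    _ = ∏ i ∈ Finset.range (maxht Γ + 1), ∏ x ∈ Finset.univ.filter (fun x => ht Γ x = i),
          ENNReal.ofReal (α (Γ.dec x)) := by
        refine Finset.prod_congr rfl fun i _ => ?_
        rw [wA, levels, Finset.prod_image]
        intro x hx y hy hxy
        have h1 := (Finset.mem_filter.mp hx).2
        have h2 := (Finset.mem_filter.mp hy).2
        exact dec_inj hac hcmp (by omega) hxy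
    _ = ∏ x : Γ.X, ENNReal.ofReal (α (Γ.dec x)) :=
        Finset.prod_fiberwise_of_maps_to (fun x _ => Finset.mem_range.mpr
          (Nat.lt_succ_of_le (ht_le_maxht x))) _

end Witness4

lemma iso_of_theList_eq {Γ Γ' : DecoratedDigraph C} {G : SimpleGraph C} {c : C}
    (hac : Γ.Acyclic)
    (hcmp : ∀ x y : Γ.X, (Γ.E x y ∨ Γ.E y x) ↔ x ≠ y ∧ Γ.dec x ∈ closedNbhd G (Γ.dec y))
    (hσ : HasUniqueSinkAt Γ c)
    (hac' : Γ'.Acyclic)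
    (hcmp' : ∀ x y : Γ'.X, (Γ'.E x y ∨ Γ'.E y x) ↔ x ≠ y ∧ Γ'.dec x ∈ closedNbhd G (Γ'.dec y))
    (hσ' : HasUniqueSinkAt Γ' c)
    (h : theList Γ = theList Γ') : Γ.Iso Γ' := by
  have hk : maxht Γ = maxht Γ' := by
    have hlen := congrArg List.length h
    rwa [theList_length, theList_length] at hlen
  have hlev : ∀ i, levels Γ i = levels Γ' i := by
    intro i
    match i with
    | 0 => rw [levels_zero hac hσ, levels_zero hac' hσ']
    | i + 1 =>
      by_cases hi : i < maxht Γ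
      · have h1 := List.get_of_eq h ⟨i, by rw [theList_length]; exact hi⟩
        rw [theList_get, theList_get] at h1
        exact h1
      · rw [levels_empty (by omega), levels_empty (by omega)]
  have hmapf : ∀ x : Γ.X, ∃ x' : Γ'.X, ht Γ' x' = ht Γ x ∧ Γ'.dec x' = Γ.dec x := by
    intro x
    have hx : Γ.dec x ∈ levels Γ' (ht Γ x) := by
      rw [← hlev]
      exact Finset.mem_image.mpr ⟨x, Finset.mem_filter.mpr ⟨Finset.mem_univ x, rfl⟩, rfl⟩
    obtain ⟨x', hx', hdec⟩ := Finset.mem_image.mp hx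
    exact ⟨x', (Finset.mem_filter.mp hx').2, hdec⟩
  have hmapg : ∀ x' : Γ'.X, ∃ x : Γ.X, ht Γ x = ht Γ' x' ∧ Γ.dec x = Γ'.dec x' := by
    intro x'
    have hx : Γ'.dec x' ∈ levels Γ (ht Γ' x') := by
      rw [hlev]
      exact Finset.mem_image.mpr ⟨x', Finset.mem_filter.mpr ⟨Finset.mem_univ x', rfl⟩, rfl⟩
    obtain ⟨x, hx2, hdec⟩ := Finset.mem_image.mp hx
    exact ⟨x, (Finset.mem_filter.mp hx2).2, hdec⟩
  choose f hf1 hf2 using hmapf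
  choose g hg1 hg2 using hmapg
  have hgf : ∀ x, g (f x) = x := fun x =>
    dec_inj hac hcmp (by rw [hg1, hf1]) (by rw [hg2, hf2])
  have hfg : ∀ x', f (g x') = x' := fun x' =>
    dec_inj hac' hcmp' (by rw [hf1, hg1]) (by rw [hf2, hg2])
  refine ⟨⟨f, g, hgf, hfg⟩, fun x y => ?_, fun x => hf2 x⟩
  rw [E_iff hac hcmp, E_iff hac' hcmp']
  simp only [Equiv.coe_fn_mk, hf1, hf2]

end SFT
end SFTaux


/-- **Second Fundamental Theorem of Moser–Tardos theory.** If `α, β : C → [0,1)` satisfy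
`α(c) ≤ β(c)·∏_{c' ∈ N(c)} (1 − β(c'))` for all `c`, then for each `c`,
`Σ_{Γ ∈ Sink*(c)} ∏_{x ∈ V(Γ)} α(δ(x)) ≤ β(c)/(1 − β(c))`, where `Sink*(c)` is a set `S` of
witness digraphs with a unique sink decorated by `c`, containing exactly one representative of
each isomorphism class. -/
theorem second_fundamental_theorem
    {V Λ : Type*} {C : Type} (Φ : CSP V Λ C)
    (hlf : ∀ c, (Φ.depGraph.neighborSet c).Finite)
    (α β : C → ℝ)
    (hα : ∀ c, 0 ≤ α c ∧ α c < 1) (hβ : ∀ c, 0 ≤ β c ∧ β c < 1)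
    (hcond : ∀ c, α c ≤ β c * ∏ c' ∈ (hlf c).toFinset, (1 - β c'))
    (c : C) (S : Set (DecoratedDigraph C))
    (hS1 : ∀ Γ ∈ S, IsWitnessDigraph Φ Γ ∧ HasUniqueSinkAt Γ c)
    (hS2 : ∀ Γ ∈ S, ∀ Γ' ∈ S, Γ.Iso Γ' → Γ = Γ')
    (hS3 : ∀ Γ : DecoratedDigraph C, IsWitnessDigraph Φ Γ → HasUniqueSinkAt Γ c →
      ∃ Γ' ∈ S, Γ.Iso Γ') :
    ∑' Γ : ↥S, ∏ x : (Γ : DecoratedDigraph C).X,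
        ENNReal.ofReal (α ((Γ : DecoratedDigraph C).dec x)) ≤
      ENNReal.ofReal (β c / (1 - β c)) := by
  classical
  have hwit : ∀ Γ : ↥S, (Γ : DecoratedDigraph C).Acyclic ∧
      (∀ x y : (Γ : DecoratedDigraph C).X,
        ((Γ : DecoratedDigraph C).E x y ∨ (Γ : DecoratedDigraph C).E y x) ↔
          x ≠ y ∧ (Γ : DecoratedDigraph C).dec x ∈
            closedNbhd Φ.depGraph ((Γ : DecoratedDigraph C).dec y)) ∧
      HasUniqueSinkAt (Γ : DecoratedDigraph C) c :=
    fun Γ => ⟨(hS1 Γ Γ.2).1.1, (hS1 Γ Γ.2).1.2, (hS1 Γ Γ.2).2⟩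
  have hBd : SFT.Bd β ({c} : Finset C) = ENNReal.ofReal (β c / (1 - β c)) := by
    rw [SFT.Bd, Finset.prod_singleton,
      ENNReal.ofReal_div_of_pos (show (0:ℝ) < 1 - β c by linarith [(hβ c).2]),
      div_eq_mul_inv, SFT.ofReal_one_sub_bb hβ c]
  rw [ENNReal.tsum_eq_iSup_sum, ← hBd]
  refine iSup_le fun s => ?_
  have hinj : ∀ Γ1 ∈ s, ∀ Γ2 ∈ s,
      SFT.theList (Γ1 : DecoratedDigraph C) = SFT.theList (Γ2 : DecoratedDigraph C) →
        Γ1 = Γ2 := by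
    intro Γ1 _ Γ2 _ hL
    obtain ⟨h1a, h1c, h1s⟩ := hwit Γ1
    obtain ⟨h2a, h2c, h2s⟩ := hwit Γ2
    exact Subtype.ext (hS2 _ Γ1.2 _ Γ2.2 (SFT.iso_of_theList_eq h1a h1c h1s h2a h2c h2s hL))
  set t := s.image (fun Γ : ↥S => SFT.theList (Γ : DecoratedDigraph C)) with hdeft
  have hsum : ∑ L ∈ t, SFT.wL Φ.depGraph α ({c} : Finset C) L =
      ∑ Γ ∈ s, ∏ x : (Γ : DecoratedDigraph C).X,
        ENNReal.ofReal (α ((Γ : DecoratedDigraph C).dec x)) := by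
    rw [hdeft, Finset.sum_image hinj]
    refine Finset.sum_congr rfl fun Γ _ => ?_
    obtain ⟨h1a, h1c, h1s⟩ := hwit Γ
    exact SFT.weight_eq h1a h1c h1s α
  rw [← hsum]
  refine le_trans (SFT.sum_wL_le_T hlf (t.sup List.length) ({c} : Finset C) t
    (fun L hL => Finset.le_sup hL)) ?_
  exact SFT.T_le_Bd hlf hβ hcond _ _
end
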